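/- Let P be a finite p-group and let Q, R be subgroups of P with N_P(Q) = N_P(R) and this common normalizer normal in P. Then Q and R are related by the relation ⊑_P (i.e., there exists g ∈ P with Q^g ∩ Z_P(R) ≤ R and gRg^{-1} ∩ Z_P(Q) ≤ Q) if and only if Q and R are conjugate in P. -/

import Mathlib

/-!
Let `A` be a subgroup of `N = N_P(B)` normalized by `N` (e.g. `N_P(A) = N`). Then `AB/B` is a
normal subgroup of the `p`-group `N/B`; a nontrivial normal subgroup of a `p`-group meets the centre
nontrivially, and an element of `AB/B` central in `N/B` comes from `A ∩ Z_P(B)`. Hence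
`A ∩ Z_P(B) ≤ B` forces `A ≤ B`. Conjugation preserves `N_P(Q) = N_P(R)` because this
normalizer is normal in `P`, so the two halves of `Q ⊑_P R` give `Q^g ≤ R` and `gRg⁻¹ ≤ Q`.
-/

/-- `H ^ g = g⁻¹ H g`, the conjugate of `H` by `g`. -/
def conjSub {G : Type*} [Group G] (H : Subgroup G) (g : G) : Subgroup G :=
  Subgroup.map (MulAut.conj g⁻¹).toMonoidHom H

/-- `g H g⁻¹`, the conjugate of `H` by `g` on the left. -/
def conjSub' {G : Type*} [Group G] (g : G) (H : Subgroup G) : Subgroup G :=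
  Subgroup.map (MulAut.conj g).toMonoidHom H

/-- `Z_P(Q)`: the subgroup of `N_P(Q)` containing `Q` with
`Z_P(Q)/Q = Z(N_P(Q)/Q)`. -/
def Zsub {G : Type*} [Group G] (Q : Subgroup G) : Subgroup G :=
  Subgroup.map (Subgroup.normalizer (Q : Set G)).subtype
    (Subgroup.comap (QuotientGroup.mk' (Q.subgroupOf (Subgroup.normalizer (Q : Set G))))
      (Subgroup.center (Subgroup.normalizer (Q : Set G) ⧸ Q.subgroupOf (Subgroup.normalizer (Q : Set G)))))

open Subgroup

theorem IsPGroup.eq_bot_of_inf_center_eq_bot {p : ℕ} [Fact p.Prime] {G : Type*} [Group G]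
    [Finite G] (hG : IsPGroup p G) {N : Subgroup G} [N.Normal] (h : N ⊓ center G = ⊥) :
    N = ⊥ := by
  by_contra hN
  have : Nontrivial N := N.nontrivial_iff_ne_bot.mpr hN
  obtain ⟨n, hn0, hn⟩ := (hG.to_subgroup N).nontrivial_iff_card.mp this
  obtain ⟨x, hx, hx1⟩ :=
    (hG.of_equiv ConjAct.toConjAct).exists_fixed_point_of_prime_dvd_card_of_fixed_point
      N (hn ▸ dvd_pow_self p hn0.ne') (a := 1) (fun _ => by simp)
  have hcenter : (x : G) ∈ center G := by
    rw [← SetLike.mem_coe, ← ConjAct.fixedPoints_eq_center]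
    intro g
    simpa only [ConjAct.Subgroup.val_conj_smul] using congrArg Subtype.val (hx g)
  exact hx1 (Subtype.ext ((mem_bot.mp (h ▸ mem_inf.mpr ⟨x.2, hcenter⟩))).symm)

theorem mk_mem_center_iff_mem_Zsub {G : Type*} [Group G] (B : Subgroup G)
    (n : normalizer (B : Set G)) :
    QuotientGroup.mk' (B.subgroupOf (normalizer (B : Set G))) n ∈ center _ ↔
      (n : G) ∈ Zsub B := by
  change _ ↔ (normalizer (B : Set G)).subtype n ∈ map _ _
  rw [mem_map_iff_mem (subtype_injective _), mem_comap]

theorem normalizer_map_conj_of_normal {G : Type*} [Group G] (H : Subgroup G)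
    [(normalizer (H : Set G)).Normal] (g : G) :
    normalizer (H.map (MulAut.conj g).toMonoidHom : Set G) = normalizer (H : Set G) := by
  rw [← map_equiv_normalizer_eq H (MulAut.conj g)]
  exact Normal.map_conj_eq _ g

theorem conjSub'_le_iff {G : Type*} [Group G] {Q R : Subgroup G} {g : G} :
    conjSub' g R ≤ Q ↔ R ≤ conjSub Q g := by
  rw [conjSub', conjSub, map_le_iff_le_comap, comap_equiv_eq_map_symm', map_inv, MulAut.inv_def]

theorem le_of_inf_Zsub_le {p : ℕ} [Fact p.Prime] {P : Type*} [Group P] [Finite P]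
    (hP : IsPGroup p P) {A B : Subgroup P} (hAN : A ≤ normalizer (B : Set P))
    (hNA : normalizer (B : Set P) ≤ normalizer (A : Set P)) (h : A ⊓ Zsub B ≤ B) :
    A ≤ B := by
  set N := normalizer (B : Set P)
  set π := QuotientGroup.mk' (B.subgroupOf N)
  have hAnormal : (A.subgroupOf N).Normal := (normal_subgroupOf_iff_le_normalizer hAN).mpr hNA
  have : ((A.subgroupOf N).map π).Normal := hAnormal.map π (QuotientGroup.mk'_surjective _)
  have hcenter : (A.subgroupOf N).map π ⊓ center _ = ⊥ := by
    rw [eq_bot_iff]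
    rintro _ ⟨⟨a, ha, rfl⟩, hc⟩
    rw [mem_bot, QuotientGroup.mk'_apply, QuotientGroup.eq_one_iff]
    exact h ⟨ha, (mk_mem_center_iff_mem_Zsub B a).mp hc⟩
  have hker := ((hP.to_subgroup N).to_quotient _).eq_bot_of_inf_center_eq_bot hcenter
  rw [Subgroup.map_eq_bot_iff, QuotientGroup.ker_mk'] at hker
  exact fun x hx => hker (show (⟨x, hAN hx⟩ : N) ∈ A.subgroupOf N from hx)

/-- Let `P` be a finite `p`-group and `Q`, `R` subgroups with
`N_P(Q) = N_P(R)` normal in `P`.  Then `Q ⊑_P R` (i.e. there is `g` with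
`Q^g ∩ Z_P(R) ≤ R` and `gRg⁻¹ ∩ Z_P(Q) ≤ Q`) iff `Q` and `R` are conjugate. -/
theorem bizlie_iff_conj_of_normalizer_normal {p : ℕ} [Fact p.Prime]
    {P : Type*} [Group P] [Finite P] (hP : IsPGroup p P)
    (Q R : Subgroup P) (hQR : Subgroup.normalizer (Q : Set P) = Subgroup.normalizer (R : Set P))
    (hN : (Subgroup.normalizer (Q : Set P)).Normal) :
    (∃ g : P, conjSub Q g ⊓ Zsub R ≤ R ∧ conjSub' g R ⊓ Zsub Q ≤ Q) ↔
      ∃ g : P, conjSub Q g = R := by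
  have hN' : (normalizer (R : Set P)).Normal := hQR ▸ hN
  constructor
  · rintro ⟨g, hQgR, hRgQ⟩
    have hQg : normalizer (conjSub Q g : Set P) = normalizer (R : Set P) :=
      (normalizer_map_conj_of_normal Q g⁻¹).trans hQR
    have hRg : normalizer (conjSub' g R : Set P) = normalizer (Q : Set P) :=
      (normalizer_map_conj_of_normal R g).trans hQR.symm
    refine ⟨g, le_antisymm ?_ (conjSub'_le_iff.mp ?_)⟩
    · exact le_of_inf_Zsub_le hP (hQg ▸ le_normalizer) hQg.ge hQgR
    · exact le_of_inf_Zsub_le hP (hRg ▸ le_normalizer) hRg.ge hRgQ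
  · rintro ⟨g, rfl⟩
    exact ⟨g, inf_le_left, inf_le_left.trans (conjSub'_le_iff.mpr le_rfl)⟩
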